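/- In the iterative pairing procedure of Lemma 'absorbentropy': given states α_j on A and β_j on B with equal traces, ranks a_j and b_j, spectral decompositions with eigenvalues listed in non-decreasing order, and |u_j⟩ = Σ_{i=1}^{min(a_j,b_j)} √(min(λ_{j,i}, μ_{j,i})) |s_{j,i}⟩⊗|r_{j,i}⟩, the updated states α_{j+1} = α_j − Tr_B|u_j⟩⟨u_j| and β_{j+1} = β_j − Tr_A|u_j⟩⟨u_j| are positive semi-definite and satisfy rank(α_{j+1}) + rank(β_{j+1}) ≤ max(a_j, b_j). -/

import Mathlib

open Matrix
open scoped ComplexOrder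

/-- Outer product `|u⟩⟨u|`. -/
noncomputable def outerM {n : Type*} (u : n → ℂ) : Matrix n n ℂ :=
  Matrix.vecMulVec u (star u)

/-- Partial trace over the second factor `B`. -/
noncomputable def ptraceB {A B : Type*} [Fintype A] [Fintype B]
    (σ : Matrix (A × B) (A × B) ℂ) : Matrix A A ℂ :=
  Matrix.of fun x x' => ∑ y, σ (x, y) (x', y)

/-- Partial trace over the first factor `A`. -/
noncomputable def ptraceA {A B : Type*} [Fintype A] [Fintype B]
    (σ : Matrix (A × B) (A × B) ℂ) : Matrix B B ℂ :=
  Matrix.of fun y y' => ∑ x, σ (x, y) (x, y')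

/-!
Put `m = min a b` and `w k = min (λ k) (μ k)` for `k < m`. Orthonormality of the `r k` gives
`Tr_B |u⟩⟨u| = Σ_{k<m} w k • |s k⟩⟨s k|`, and symmetrically for `Tr_A`. Hence
`α - Tr_B |u⟩⟨u| = Σ_{k<m} (λ k - w k) • |s k⟩⟨s k| + Σ_{k≥m} λ k • |s k⟩⟨s k|` has nonnegative
weights, and its rank is at most the number of nonzero weights. For each `k < m` one of
`λ k - w k`, `μ k - w k` vanishes, so the two ranks add up to at most
`m + (a - m) + (b - m) = max a b`.
-/

open Finset

theorem Matrix.rank_add_le {m n K : Type*} [Fintype n] [Field K] (M N : Matrix m n K) :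
    (M + N).rank ≤ M.rank + N.rank := by
  rw [rank, rank, rank, mulVecLin_add]
  exact (Submodule.finrank_mono (LinearMap.range_add_le _ _)).trans
    (Submodule.finrank_add_le_finrank_add_finrank _ _)

theorem Matrix.rank_finsetSum_le {ι m n K : Type*} [Fintype n] [Field K] (S : Finset ι)
    (M : ι → Matrix m n K) : (∑ i ∈ S, M i).rank ≤ ∑ i ∈ S, (M i).rank :=
  Finset.sum_hom_rel (r := fun (A : Matrix m n K) (k : ℕ) => A.rank ≤ k) (by simp)
    fun _ _ _ h => (rank_add_le _ _).trans (by gcongr)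

theorem Fin.sum_univ_eq_sum_castLE_add {M : Type*} [AddCommMonoid M] {m a : ℕ} (h : m ≤ a)
    (f : Fin a → M) : ∑ i, f i = ∑ k : Fin m, f (castLE h k) + ∑ i : Fin a with m ≤ i.val, f i := by
  rw [← sum_filter_add_sum_filter_not univ (fun i : Fin a => (i : ℕ) < m)]
  congr 1
  · rw [← coe_castLEEmb, ← sum_map]
    congr 1
    ext i
    simpa using ⟨fun hi => ⟨⟨i, hi⟩, rfl⟩, by rintro ⟨k, rfl⟩; exact k.isLt⟩
  · simp only [not_lt]

theorem Fin.card_filter_le_val {m a : ℕ} (h : m ≤ a) : #{i : Fin a | m ≤ i.val} = a - m := by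
  have := card_filter_add_card_filter_not (s := univ) (fun i : Fin a => (i : ℕ) < m)
  simp only [card_filter_val_lt, not_lt, card_univ, Fintype.card_fin] at this
  omega

theorem card_filter_min_ne_add_card_filter_min_ne_le {ι α : Type*} [Fintype ι] [LinearOrder α]
    (x y : ι → α) :
    #{i | min (x i) (y i) ≠ x i} + #{i | min (x i) (y i) ≠ y i} ≤ Fintype.card ι := by
  calc _ ≤ #{i | min (x i) (y i) ≠ x i} + #{i | ¬ min (x i) (y i) ≠ x i} := by
        gcongr with i _
        exact fun hx => (min_choice _ _).resolve_left hx
    _ = Fintype.card ι := card_filter_add_card_filter_not _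

section OuterProduct

variable {n : Type*} [Fintype n]

theorem posSemidef_sum_smul_outerM {ι : Type*} (S : Finset ι) (c : ι → ℝ) (v : ι → n → ℂ)
    (hc : ∀ i ∈ S, 0 ≤ c i) : (∑ i ∈ S, (c i : ℂ) • outerM (v i)).PosSemidef :=
  posSemidef_sum S fun i hi =>
    (posSemidef_vecMulVec_self_star (v i)).smul (Complex.zero_le_real.mpr (hc i hi))

theorem rank_sum_smul_outerM_le {ι : Type*} (S : Finset ι) (c : ι → ℝ) (v : ι → n → ℂ) :
    (∑ i ∈ S, (c i : ℂ) • outerM (v i)).rank ≤ #{i ∈ S | c i ≠ 0} := by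
  rw [← sum_filter_of_ne (p := fun i => c i ≠ 0) fun i _ hne hc => hne (by simp [hc])]
  calc _ ≤ ∑ i ∈ S with c i ≠ 0, ((c i : ℂ) • outerM (v i)).rank := rank_finsetSum_le _ _
    _ ≤ ∑ i ∈ S with c i ≠ 0, 1 := sum_le_sum fun i _ => by
        rw [outerM, ← smul_vecMulVec]
        exact rank_vecMulVec_le _ _
    _ = _ := by simp

end OuterProduct

open ComplexConjugate in
theorem ptraceB_outerM_sum_mul {A B ι : Type*} [Fintype A] [Fintype B] [Fintype ι] [DecidableEq ι]
    (c : ι → ℝ) (f : ι → A → ℂ) (g : ι → B → ℂ)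
    (hg : ∀ i j, ∑ y, star (g i y) * g j y = if i = j then 1 else 0) :
    ptraceB (outerM fun p => ∑ i, (c i : ℂ) * f i p.1 * g i p.2) =
      ∑ i, ((c i ^ 2 : ℝ) : ℂ) • outerM (f i) := by
  ext x x'
  simp only [ptraceB, outerM, of_apply, vecMulVec_apply, Pi.star_apply, Matrix.sum_apply,
    Matrix.smul_apply, smul_eq_mul, star_sum, star_mul', Complex.star_def, Complex.conj_ofReal, sum_mul_sum]
  calc ∑ y, ∑ i, ∑ j, (c i : ℂ) * f i x * g i y * (c j * conj (f j x') * conj (g j y))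
      = ∑ i, ∑ j, c i * f i x * (c j * conj (f j x')) * ∑ y, star (g j y) * g i y := by
        rw [sum_comm]
        refine sum_congr rfl fun i _ => ?_
        rw [sum_comm]
        refine sum_congr rfl fun j _ => ?_
        rw [mul_sum]
        exact sum_congr rfl fun y _ => by simp only [Complex.star_def]; ring
    _ = _ := by
        simp only [hg, mul_ite, mul_one, mul_zero, sum_ite_eq', mem_univ, if_true]
        refine sum_congr rfl fun i _ => ?_
        push_cast
        ring

theorem ptraceA_outerM_eq_ptraceB_outerM_swap {A B : Type*} [Fintype A] [Fintype B]
    (u : A × B → ℂ) : ptraceA (outerM u) = ptraceB (outerM (u ∘ Prod.swap)) :=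
  rfl

theorem ptraceA_outerM_sum_mul {A B ι : Type*} [Fintype A] [Fintype B] [Fintype ι] [DecidableEq ι]
    (c : ι → ℝ) (f : ι → A → ℂ) (g : ι → B → ℂ)
    (hf : ∀ i j, ∑ x, star (f i x) * f j x = if i = j then 1 else 0) :
    ptraceA (outerM fun p => ∑ i, (c i : ℂ) * f i p.1 * g i p.2) =
      ∑ i, ((c i ^ 2 : ℝ) : ℂ) • outerM (g i) := by
  rw [ptraceA_outerM_eq_ptraceB_outerM_swap, ← ptraceB_outerM_sum_mul c g f hf]
  simp only [Function.comp_def, Prod.fst_swap, Prod.snd_swap, mul_right_comm]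

section Pairing

variable {n : Type*} {m a : ℕ} (h : m ≤ a) (lam : Fin a → ℝ) (w : Fin m → ℝ)
  (s : Fin a → n → ℂ)

open Fin

theorem sum_smul_outerM_sub_castLE_eq :
    ∑ i, (lam i : ℂ) • outerM (s i) - ∑ k, (w k : ℂ) • outerM (s (castLE h k)) =
      ∑ k, ((lam (castLE h k) - w k : ℝ) : ℂ) • outerM (s (castLE h k)) +
        ∑ i : Fin a with m ≤ i.val, (lam i : ℂ) • outerM (s i) := by
  rw [sum_univ_eq_sum_castLE_add h, add_sub_right_comm, ← sum_sub_distrib]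
  simp only [Complex.ofReal_sub, sub_smul]

theorem posSemidef_sum_smul_outerM_sub_castLE [Fintype n] (hlam : ∀ i, 0 ≤ lam i)
    (hw : ∀ k, w k ≤ lam (castLE h k)) :
    (∑ i, (lam i : ℂ) • outerM (s i) - ∑ k, (w k : ℂ) • outerM (s (castLE h k))).PosSemidef := by
  rw [sum_smul_outerM_sub_castLE_eq]
  exact (posSemidef_sum_smul_outerM _ _ _ fun k _ => sub_nonneg.mpr (hw k)).add
    (posSemidef_sum_smul_outerM _ _ _ fun i _ => hlam i)

theorem rank_sum_smul_outerM_sub_castLE_le [Fintype n] :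
    (∑ i, (lam i : ℂ) • outerM (s i) - ∑ k, (w k : ℂ) • outerM (s (castLE h k))).rank ≤
      #{k | w k ≠ lam (castLE h k)} + (a - m) := by
  rw [sum_smul_outerM_sub_castLE_eq]
  refine (rank_add_le _ _).trans (add_le_add ?_ ?_)
  · exact (rank_sum_smul_outerM_le _ _ _).trans_eq (by simp only [sub_ne_zero, ne_comm])
  · exact (rank_sum_smul_outerM_le _ _ _).trans
      ((card_filter_le _ _).trans_eq (card_filter_le_val h))

end Pairing

open Fin in
theorem absorb_entropy_step_general
    {A B : Type*} [Fintype A] [Fintype B]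
    (α : Matrix A A ℂ) (β : Matrix B B ℂ)
    (a b : ℕ) (lam : Fin a → ℝ) (mu : Fin b → ℝ)
    (s : Fin a → A → ℂ) (r : Fin b → B → ℂ)
    (hs : ∀ i j, (∑ x, star (s i x) * s j x) = if i = j then 1 else 0)
    (hr : ∀ i j, (∑ y, star (r i y) * r j y) = if i = j then 1 else 0)
    (hlampos : ∀ i, 0 < lam i) (hmupos : ∀ i, 0 < mu i)
    (hα : α = ∑ i, (lam i : ℂ) • outerM (s i))
    (hβ : β = ∑ i, (mu i : ℂ) • outerM (r i))
    (u : A × B → ℂ)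
    (hu : u = fun p => ∑ i : Fin (min a b),
      (Real.sqrt (min (lam ⟨i.val, lt_of_lt_of_le i.isLt (min_le_left a b)⟩)
          (mu ⟨i.val, lt_of_lt_of_le i.isLt (min_le_right a b)⟩)) : ℂ) *
        s ⟨i.val, lt_of_lt_of_le i.isLt (min_le_left a b)⟩ p.1 *
        r ⟨i.val, lt_of_lt_of_le i.isLt (min_le_right a b)⟩ p.2) :
    (α - ptraceB (outerM u)).PosSemidef ∧ (β - ptraceA (outerM u)).PosSemidef ∧
      (α - ptraceB (outerM u)).rank + (β - ptraceA (outerM u)).rank ≤ max a b := by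
  have ha : min a b ≤ a := min_le_left a b
  have hb : min a b ≤ b := min_le_right a b
  set w : Fin (min a b) → ℝ := fun k => min (lam (castLE ha k)) (mu (castLE hb k))
  have hu' : u = fun p => ∑ k, (√(w k) : ℂ) * s (castLE ha k) p.1 * r (castLE hb k) p.2 := hu
  have hsqrt : ∀ k, √(w k) ^ 2 = w k := fun k => Real.sq_sqrt (le_min (hlampos _).le (hmupos _).le)
  have hPB : ptraceB (outerM u) = ∑ k, (w k : ℂ) • outerM (s (castLE ha k)) := by
    rw [hu', ptraceB_outerM_sum_mul _ _ _ fun i j => (hr _ _).trans (by simp only [castLE_inj])]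
    simp only [hsqrt]
  have hPA : ptraceA (outerM u) = ∑ k, (w k : ℂ) • outerM (r (castLE hb k)) := by
    rw [hu', ptraceA_outerM_sum_mul _ _ _ fun i j => (hs _ _).trans (by simp only [castLE_inj])]
    simp only [hsqrt]
  subst hα hβ
  rw [hPB, hPA]
  refine ⟨posSemidef_sum_smul_outerM_sub_castLE ha lam w s (fun i => (hlampos i).le)
      fun _ => min_le_left _ _,
    posSemidef_sum_smul_outerM_sub_castLE hb mu w r (fun i => (hmupos i).le)
      fun _ => min_le_right _ _, ?_⟩
  have hpaired : #{k | w k ≠ lam (castLE ha k)} + #{k | w k ≠ mu (castLE hb k)} ≤ min a b :=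
    (card_filter_min_ne_add_card_filter_min_ne_le _ _).trans_eq (Fintype.card_fin _)
  have hranks := add_le_add (rank_sum_smul_outerM_sub_castLE_le ha lam w s)
    (rank_sum_smul_outerM_sub_castLE_le hb mu w r)
  omega

/-- One step of the entropy-absorbing pairing procedure: subtracting the marginals of
`|u⟩⟨u|`, where `|u⟩ = Σ_i √(min(λ_i,μ_i)) |s_i⟩⊗|r_i⟩` pairs the eigenvectors of `α` and
`β` (nonzero eigenvalues, smallest first), leaves positive semidefinite states whose ranks
sum to at most `max(a, b)`. -/
theorem absorb_entropy_step
    {A B : Type*} [Fintype A] [Fintype B] [DecidableEq A] [DecidableEq B]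
    (α : Matrix A A ℂ) (β : Matrix B B ℂ)
    (a b : ℕ) (lam : Fin a → ℝ) (mu : Fin b → ℝ)
    (s : Fin a → A → ℂ) (r : Fin b → B → ℂ)
    (hs : ∀ i j, (∑ x, star (s i x) * s j x) = if i = j then 1 else 0)
    (hr : ∀ i j, (∑ y, star (r i y) * r j y) = if i = j then 1 else 0)
    (hlampos : ∀ i, 0 < lam i) (hmupos : ∀ i, 0 < mu i)
    (hlammono : Monotone lam) (hmumono : Monotone mu)
    (hα : α = ∑ i, (lam i : ℂ) • outerM (s i))
    (hβ : β = ∑ i, (mu i : ℂ) • outerM (r i))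
    (hrankα : α.rank = a) (hrankβ : β.rank = b)
    (htr : α.trace = β.trace)
    (u : A × B → ℂ)
    (hu : u = fun p => ∑ i : Fin (min a b),
      (Real.sqrt (min (lam ⟨i.val, lt_of_lt_of_le i.isLt (min_le_left a b)⟩)
          (mu ⟨i.val, lt_of_lt_of_le i.isLt (min_le_right a b)⟩)) : ℂ) *
        s ⟨i.val, lt_of_lt_of_le i.isLt (min_le_left a b)⟩ p.1 *
        r ⟨i.val, lt_of_lt_of_le i.isLt (min_le_right a b)⟩ p.2) :
    (α - ptraceB (outerM u)).PosSemidef ∧ (β - ptraceA (outerM u)).PosSemidef ∧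
      (α - ptraceB (outerM u)).rank + (β - ptraceA (outerM u)).rank ≤ max a b :=
  absorb_entropy_step_general α β a b lam mu s r hs hr hlampos hmupos hα hβ u hu
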